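/- Let B_r be an open ball in ℝ^n of radius r > 0 with B_r ∩ G ≠ ∅, let h ∈ ℤ be the minimum integer such that B_r ∩ G_h ≠ ∅, and let E > 0. Then there exists S > 0 depending only on M and E (one may take S = 2[2 + (M+1)E]) such that for every η ∈ ℝ^n with |η| < E there exists a point x_η ∈ ℝ^n with ⋃_{k=h+3}^{∞} ( (B_r ∩ G̃_k) − 2^{−k}η ) ⊂ B_{Sr}(x_η), where B_{Sr}(x_η) is the ball of center x_η and radius Sr. -/

import Mathlib

open MeasureTheory Metric Set
open scoped ENNReal NNReal Classical

noncomputable section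

/-- `ℝⁿ` with `n = (dim) ≥ 2` modeled as `EuclideanSpace ℝ (Fin (n+1))`. -/
abbrev EucX (n : ℕ) := EuclideanSpace ℝ (Fin (n+1))
/-- `ℝ^{n-1}` modeled as `EuclideanSpace ℝ (Fin n)`. -/
abbrev EucY (n : ℕ) := EuclideanSpace ℝ (Fin n)

variable {n : ℕ}

/-- `x̄`, the first `n-1` coordinates of a point of `ℝⁿ`. -/
def barX (x : EucX n) : EucY n := WithLp.toLp 2 (fun i : Fin n => x i.castSucc)
/-- `x_n`, the last coordinate of a point of `ℝⁿ`. -/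
def lastX (x : EucX n) : ℝ := x (Fin.last n)
/-- `ρ_n(x) = x_n - φ(x̄)`. -/
def rhoN (φ : EucY n → ℝ) (x : EucX n) : ℝ := lastX x - φ (barX x)
/-- The elementary Lipschitz domain `Ω = {x : x_n < φ(x̄)}`. -/
def OmSet (φ : EucY n → ℝ) : Set (EucX n) := {x | lastX x < φ (barX x)}
/-- `G = ℝⁿ \ closure Ω`. -/
def GSet (φ : EucY n → ℝ) : Set (EucX n) := (closure (OmSet φ))ᶜ
/-- `G_k = {x ∈ G : 2^{-k-1} < ρ_n(x) ≤ 2^{-k}}`. -/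
def GkSet (φ : EucY n → ℝ) (k : ℤ) : Set (EucX n) :=
  {x ∈ GSet φ | (2:ℝ) ^ (-k-1) < rhoN φ x ∧ rhoN φ x ≤ (2:ℝ) ^ (-k)}
/-- `G̃_k = {x ∈ G : 2^{-k-2} < ρ_n(x) ≤ 2^{-k+1}}`. -/
def tGkSet (φ : EucY n → ℝ) (k : ℤ) : Set (EucX n) :=
  {x ∈ GSet φ | (2:ℝ) ^ (-k-2) < rhoN φ x ∧ rhoN φ x ≤ (2:ℝ) ^ (-k+1)}

lemma dist_last_le (x y : EucX n) : |lastX x - lastX y| ≤ dist x y := by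
  have h0 : |lastX x - lastX y| = dist (x (Fin.last n)) (y (Fin.last n)) := by
    rw [Real.dist_eq]; rfl
  rw [h0, EuclideanSpace.dist_eq]
  have h1 : dist (x (Fin.last n)) (y (Fin.last n)) ^ 2 ≤ ∑ i, dist (x i) (y i) ^ 2 :=
    Finset.single_le_sum (f := fun i => dist (x i) (y i) ^ 2) (fun i _ => sq_nonneg _) (Finset.mem_univ _)
  calc dist (x (Fin.last n)) (y (Fin.last n))
      = Real.sqrt (dist (x (Fin.last n)) (y (Fin.last n)) ^ 2) := (Real.sqrt_sq dist_nonneg).symm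
    _ ≤ _ := Real.sqrt_le_sqrt h1

lemma dist_bar_le (x y : EucX n) : dist (barX x) (barX y) ≤ dist x y := by
  rw [EuclideanSpace.dist_eq, EuclideanSpace.dist_eq]
  apply Real.sqrt_le_sqrt
  rw [Fin.sum_univ_castSucc (f := fun i => dist (x i) (y i) ^ 2)]
  exact le_add_of_nonneg_right (sq_nonneg _)

lemma rho_lip (M : ℝ) (hM : 0 ≤ M) (φ : EucY n → ℝ) (hφ : ∀ x y : EucY n, |φ x - φ y| ≤ M * dist x y)
    (x y : EucX n) : |rhoN φ x - rhoN φ y| ≤ (M + 1) * dist x y := by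
  have h1 : |lastX x - lastX y| ≤ dist x y := dist_last_le x y
  have h2 : |φ (barX x) - φ (barX y)| ≤ M * dist x y :=
    le_trans (hφ _ _) (mul_le_mul_of_nonneg_left (dist_bar_le x y) hM)
  calc |rhoN φ x - rhoN φ y|
      = |(lastX x - lastX y) - (φ (barX x) - φ (barX y))| := by rw [rhoN, rhoN]; ring_nf
    _ ≤ |lastX x - lastX y| + |φ (barX x) - φ (barX y)| := abs_sub _ _
    _ ≤ (M + 1) * dist x y := by linarith

/-- Lemma 2.3, first part: there is `S > 0` depending only on `M` and `E`
(one may take `S = 2[2+(M+1)E]`) such that for every `η` with `|η| < E` the union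
`⋃_{k ≥ h+3} ((B_r ∩ G̃_k) - 2^{-k}η)` is contained in a ball of radius `S r`. -/
theorem statement1 (M E : ℝ) (hM : 0 ≤ M) (hE : 0 < E) :
    ∃ S : ℝ, 0 < S ∧ S = 2 * (2 + (M + 1) * E) ∧
      ∀ (n : ℕ), 1 ≤ n → ∀ (φ : EucY n → ℝ),
        (∀ x y : EucY n, |φ x - φ y| ≤ M * dist x y) →
        ∀ (x₀ : EucX n) (r : ℝ), 0 < r →
        (ball x₀ r ∩ GSet φ).Nonempty →
        ∀ h : ℤ, (ball x₀ r ∩ GkSet φ h).Nonempty →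
        (∀ j : ℤ, (ball x₀ r ∩ GkSet φ j).Nonempty → h ≤ j) →
        ∀ η : EucX n, ‖η‖ < E →
        ∃ xη : EucX n,
          (⋃ (k : ℤ) (_ : h + 3 ≤ k),
              (fun x => x - (2:ℝ) ^ (-k) • η) '' (ball x₀ r ∩ tGkSet φ k))
            ⊆ ball xη (S * r) := by
  refine ⟨2 * (2 + (M + 1) * E), by nlinarith, rfl, ?_⟩
  intro n hn φ hφ x₀ r hr _ h hGh _ η hη
  refine ⟨x₀, ?_⟩
  intro y hy
  simp only [mem_iUnion, mem_image] at hy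
  obtain ⟨k, hk, x, ⟨hxball, hxG⟩, rfl⟩ := hy
  obtain ⟨p, hpball, hpG⟩ := hGh
  -- key: 2^(-h-2) < 2*(M+1)*r
  have hρp : (2:ℝ) ^ (-h-1) < rhoN φ p := hpG.2.1
  have hρx : rhoN φ x ≤ (2:ℝ) ^ (-k+1) := hxG.2.2
  have hk1 : (2:ℝ) ^ (-k+1) ≤ (2:ℝ) ^ (-h-2) :=
    zpow_le_zpow_right₀ one_le_two (by omega)
  have hdpx : dist p x < 2 * r := by
    have h1 := mem_ball.mp hpball
    have h2 := mem_ball.mp hxball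
    calc dist p x ≤ dist p x₀ + dist x₀ x := dist_triangle _ _ _
      _ < 2 * r := by rw [dist_comm x₀ x] at *; linarith
  have hlip := rho_lip M hM φ hφ p x
  have habs : rhoN φ p - rhoN φ x ≤ (M+1) * dist p x := le_trans (le_abs_self _) hlip
  have hpow : (2:ℝ) ^ (-h-1) = 2 * (2:ℝ) ^ (-h-2) := by
    rw [show (-h-1 : ℤ) = (-h-2) + 1 by ring, zpow_add_one₀ (two_ne_zero)]
    ring
  have hkey : (2:ℝ) ^ (-h-2) < 2 * (M+1) * r := by nlinarith
  have hk2 : (2:ℝ) ^ (-k) ≤ (2:ℝ) ^ (-h-3) := zpow_le_zpow_right₀ one_le_two (by omega)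
  have hpow2 : (2:ℝ) ^ (-h-2) = 2 * (2:ℝ) ^ (-h-3) := by
    rw [show (-h-2 : ℤ) = (-h-3) + 1 by ring, zpow_add_one₀ (two_ne_zero)]
    ring
  have hk3 : (2:ℝ) ^ (-k) < (M+1) * r := by
    have : (2:ℝ) ^ (-h-3) < (M+1) * r := by linarith
    linarith
  -- distance bound
  have hkpos : (0:ℝ) < (2:ℝ) ^ (-k) := zpow_pos two_pos _
  have hnorm : ‖(2:ℝ) ^ (-k) • η‖ ≤ (2:ℝ) ^ (-k) * E := by
    rw [norm_smul, Real.norm_eq_abs, abs_of_pos hkpos]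
    exact mul_le_mul_of_nonneg_left hη.le hkpos.le
  have : dist (x - (2:ℝ) ^ (-k) • η) x₀ < 2 * (2 + (M + 1) * E) * r := by
    calc dist (x - (2:ℝ) ^ (-k) • η) x₀ ≤ dist (x - (2:ℝ) ^ (-k) • η) x + dist x x₀ :=
          dist_triangle _ _ _
      _ < (2:ℝ) ^ (-k) * E + r := by
          have : dist (x - (2:ℝ) ^ (-k) • η) x = ‖(2:ℝ) ^ (-k) • η‖ := by
            rw [dist_eq_norm]; simp
          rw [this]
          have := mem_ball.mp hxball
          linarith
      _ ≤ (M+1) * r * E + r := by nlinarith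
      _ ≤ 2 * (2 + (M + 1) * E) * r := by nlinarith
  exact mem_ball.mpr this
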